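/- arXiv:math/0703722 — 7 statements merged into one kernel-verified Lean document; each statement's English description precedes it below -/
import Mathlib

section
/- Let F be a field of characteristic 0 and α, β, γ ∈ F with α ≠ 0. Set a := 1 + α²(1+β²)(1+γ²). Then in the polynomial ring F[y] one has the identity (y²+1)(y²+a)(y²+b)(y²+c) = ( (a−1)y(y²+a)/α + αβγ((1−βγ)y+β+γ)(y²+1) )² + ( (a−1)(y²+a)/α + αβγ(1−βγ−(β+γ)y)(y²+1) )² + ( (y²+1)(y²+a−βγ(a−1)) )², where b := 1 + α²(1+β²)²(1+γ²) and c := 1 + α²(1+β²)(1+γ²)². -/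
open Polynomial

theorem product_four_sums_is_sum_three_squares
    (F : Type*) [Field F] [CharZero F] (α β γ a b c : F) (hα : α ≠ 0)
    (ha : a = 1 + α ^ 2 * (1 + β ^ 2) * (1 + γ ^ 2))
    (hb : b = 1 + α ^ 2 * (1 + β ^ 2) ^ 2 * (1 + γ ^ 2))
    (hc : c = 1 + α ^ 2 * (1 + β ^ 2) * (1 + γ ^ 2) ^ 2) :
    (X ^ 2 + 1) * (X ^ 2 + C a) * (X ^ 2 + C b) * (X ^ 2 + C c) =
      (C ((a - 1) / α) * X * (X ^ 2 + C a)
          + C (α * β * γ) * (C (1 - β * γ) * X + C (β + γ)) * (X ^ 2 + 1)) ^ 2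
      + (C ((a - 1) / α) * (X ^ 2 + C a)
          + C (α * β * γ) * (C (1 - β * γ) - C (β + γ) * X) * (X ^ 2 + 1)) ^ 2
      + ((X ^ 2 + 1) * (X ^ 2 + C (a - β * γ * (a - 1)))) ^ 2 := by
  have hdiv : (a - 1) / α = α * (1 + β ^ 2) * (1 + γ ^ 2) := by
    rw [ha]; field_simp; ring
  subst hb hc
  rw [hdiv, ha]
  simp only [map_add, map_mul, map_sub, map_pow, map_one]
  ring
end

section
/- Let A and B be finitely generated abelian groups and let φ: A → B and ψ: B → A be group homomorphisms such that ψ ∘ φ is multiplication by 2 on A and φ ∘ ψ is multiplication by 2 on B. Then A is a torsion group (i.e. has rank 0) if and only if every element of A is the sum of a torsion element of A and an element of ψ(B), and every element of B is the sum of a torsion element of B and an element of φ(A). -/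
theorem rank_zero_iff_descent
    (A B : Type*) [AddCommGroup A] [AddCommGroup B]
    [AddGroup.FG A] [AddGroup.FG B]
    (φ : A →+ B) (ψ : B →+ A)
    (hψφ : ∀ a : A, ψ (φ a) = 2 • a) (hφψ : ∀ b : B, φ (ψ b) = 2 • b) :
    (∀ a : A, IsOfFinAddOrder a) ↔
      ((∀ a : A, ∃ (t : A) (b : B), IsOfFinAddOrder t ∧ a = t + ψ b) ∧
       (∀ b : B, ∃ (t : B) (a : A), IsOfFinAddOrder t ∧ b = t + φ a)) := by
  constructor
  · intro hA
    have hB : ∀ b : B, IsOfFinAddOrder b := by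
      intro b
      obtain ⟨n, hn, h0⟩ := (isOfFinAddOrder_iff_nsmul_eq_zero).mp (hA (ψ b))
      refine isOfFinAddOrder_iff_nsmul_eq_zero.mpr ⟨n * 2, by positivity, ?_⟩
      calc (n * 2) • b = n • (2 • b) := mul_smul n 2 b
        _ = n • φ (ψ b) := by rw [hφψ]
        _ = φ (n • ψ b) := by rw [map_nsmul]
        _ = 0 := by rw [h0, map_zero]
    exact ⟨fun a => ⟨a, 0, hA a, by simp⟩, fun b => ⟨b, 0, hB b, by simp⟩⟩
  · rintro ⟨hA, hB⟩ a
    -- Key: every element of A is a torsion element plus twice an element.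
    have key : ∀ x : A, ∃ (t : A) (y : A), IsOfFinAddOrder t ∧ x = t + 2 • y := by
      intro x
      obtain ⟨t, b, ht, hx⟩ := hA x
      obtain ⟨t', a', ht', hb⟩ := hB b
      refine ⟨t + ψ t', a', ht.add (ψ.isOfFinAddOrder ht'), ?_⟩
      rw [hx, hb, map_add, hψφ, add_assoc]
    -- Pass to the torsion-free quotient.
    set T := AddCommGroup.torsion A with hT
    let Q := A ⧸ T
    have hfree : IsAddTorsionFree Q := by
      have := QuotientAddGroup.instIsAddTorsionFree (G := A)
      exact this
    haveI : Module.IsTorsionFree ℤ Q :=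
      (Module.isTorsionFree_int_iff_isAddTorsionFree).mpr
        (QuotientAddGroup.instIsAddTorsionFree (G := A))
    haveI : Module.Finite ℤ Q := Module.Finite.iff_addGroup_fg.mpr inferInstance
    haveI : Module.Free ℤ Q := Module.free_of_finite_type_torsion_free'
    -- Every element of Q is divisible by 2.
    have hdiv : ∀ q : Q, ∃ q' : Q, q = 2 • q' := by
      intro q
      induction q using QuotientAddGroup.induction_on with
      | H x =>
        obtain ⟨t, y, ht, hx⟩ := key x
        refine ⟨QuotientAddGroup.mk y, ?_⟩
        have : ((t : A) : Q) = 0 := (QuotientAddGroup.eq_zero_iff t).mpr ht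
        rw [hx]
        rw [QuotientAddGroup.mk_add, this, zero_add]
        rfl
    -- A finitely generated free ℤ-module all of whose elements are divisible by 2 is trivial.
    have hQ : ∀ q : Q, q = 0 := by
      intro q
      let b := Module.Free.chooseBasis ℤ Q
      rcases isEmpty_or_nonempty (Module.Free.ChooseBasisIndex ℤ Q) with hι | hι
      · have : b.repr q = 0 := Subsingleton.elim _ _
        have := b.repr.symm.congr_arg this
        simpa using (b.repr.symm_apply_apply q).symm.trans (by rw [this]; simp)
      · exfalso
        obtain ⟨i⟩ := hι
        obtain ⟨q', hq'⟩ := hdiv (b i)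
        have h1 : b.repr (b i) i = 1 := by simp
        have h2 : b.repr (2 • q') i = 2 * b.repr q' i := by
          rw [map_nsmul]; simp [two_mul]
        rw [hq', h2] at h1
        omega
    have : ((a : A) : Q) = 0 := hQ _
    exact (QuotientAddGroup.eq_zero_iff a).mp this
end

section
/- Let Γ be a finite group acting by automorphisms on a finitely generated free abelian group A, such that the induced action of Γ on A/2A is trivial. Then A has a ℤ-basis (a₁, …, a_t) such that for every τ ∈ Γ and every i, τ(a_i) ∈ {a_i, −a_i}. -/
section ChristieAux

/-- Binomial-type expansion in a noncommutative ring. -/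
private lemma christie_bin {R : Type*} [Ring R] (c : R) (n : ℕ) :
    ∃ w, (1 + c) ^ n = 1 + n • c + c ^ 2 * w := by
  induction n with
  | zero => exact ⟨0, by simp⟩
  | succ n ih =>
    obtain ⟨w, hw⟩ := ih
    refine ⟨n • (1 : R) + w + w * c, ?_⟩
    rw [pow_succ, hw]
    simp only [succ_nsmul, smul_add, mul_add, add_mul, one_mul, mul_one, smul_mul_assoc]
    noncomm_ring

private lemma christie_pow4 {R : Type*} [Ring R] (m : R) (n : ℕ) :
    ∃ g, (1 + (4 : ℤ) • m) ^ n = 1 + (4 : ℤ) • g := by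
  induction n with
  | zero => exact ⟨0, by simp⟩
  | succ n ih =>
    obtain ⟨g, hg⟩ := ih
    refine ⟨m + g + (4 : ℤ) • (g * m), ?_⟩
    rw [pow_succ, hg]
    simp only [smul_add, mul_add, add_mul, one_mul, mul_one, smul_mul_assoc,
      mul_smul_comm, smul_smul]
    noncomm_ring

variable {A : Type*} [AddCommGroup A] [Module.Free ℤ A]

private lemma christie_smul_cancel {k : ℤ} (hk : k ≠ 0) {x : A} (h : k • x = 0) : x = 0 := by
  rcases smul_eq_zero.mp h with h | h
  · exact absurd h hk
  · exact h

private lemma christie_end_smul_cancel {k : ℤ} (hk : k ≠ 0) {f : Module.End ℤ A}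
    (h : k • f = 0) : f = 0 := by
  ext a
  have : k • f a = 0 := congrFun (congrArg DFunLike.coe h) a
  simpa using christie_smul_cancel hk this

/-- Halving an endomorphism whose values are all divisible by 2. -/
private lemma christie_halve (r : Module.End ℤ A) (h : ∀ a, ∃ b, r a = (2 : ℤ) • b) :
    ∃ s : Module.End ℤ A, r = (2 : ℤ) • s := by
  have hinj : Function.Injective (fun x : A => (2 : ℤ) • x) :=
    smul_right_injective A (by norm_num)
  refine ⟨{ toFun := fun a => (h a).choose, map_add' := ?_, map_smul' := ?_ }, ?_⟩
  · intro a b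
    apply hinj
    simp only
    rw [← (h (a + b)).choose_spec, smul_add, ← (h a).choose_spec, ← (h b).choose_spec,
      map_add]
  · intro c a
    apply hinj
    simp only [RingHom.id_apply]
    show (2 : ℤ) • (h (c • a)).choose = (2:ℤ) • (c • (h a).choose)
    rw [← (h (c • a)).choose_spec, smul_comm (2:ℤ) c, ← (h a).choose_spec, map_smul]
  · ext a
    simp only [LinearMap.smul_apply, LinearMap.coe_mk, AddHom.coe_mk]
    exact (h a).choose_spec

private lemma christie_end_zero [Module.Finite ℤ A] (m : Module.End ℤ A)
    (h : ∀ j : ℕ, ∃ s : Module.End ℤ A, m = ((2 : ℤ) ^ j) • s) : m = 0 := by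
  by_contra hm
  obtain ⟨a, ha⟩ : ∃ a, m a ≠ 0 := by
    by_contra hc
    push_neg at hc
    exact hm (LinearMap.ext fun a => by simpa using hc a)
  set b := Module.Free.chooseBasis ℤ A with hb
  have hr : b.repr (m a) ≠ 0 := fun h0 => ha (b.repr.map_eq_zero_iff.mp h0)
  obtain ⟨i, hi⟩ : ∃ i, b.repr (m a) i ≠ 0 := by
    by_contra hc
    push_neg at hc
    exact hr (Finsupp.ext hc)
  set c : ℤ := b.repr (m a) i with hc
  set j : ℕ := c.natAbs + 1 with hj
  obtain ⟨s, hs⟩ := h j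
  have hma : m a = ((2 : ℤ) ^ j) • s a := by rw [hs]; rfl
  have hdvd : ((2 : ℤ) ^ j) ∣ c := by
    refine ⟨b.repr (s a) i, ?_⟩
    rw [hc, hma, map_smul]
    simp [smul_eq_mul]
  have hle : (2 : ℤ) ^ j ≤ |c| := Int.le_of_dvd (abs_pos.mpr hi) ((dvd_abs _ _).mpr hdvd)
  have h1 : c.natAbs < 2 ^ c.natAbs := Nat.lt_two_pow_self
  have h2 : (2 : ℕ) ^ c.natAbs ≤ 2 ^ j := Nat.pow_le_pow_right (by norm_num) (by omega)
  have h3 : |c| = (c.natAbs : ℤ) := Int.abs_eq_natAbs c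
  rw [h3] at hle
  have h4 : (2 : ℤ) ^ j = ((2 ^ j : ℕ) : ℤ) := by push_cast; ring
  rw [h4] at hle
  have h5 : (2:ℕ) ^ j ≤ c.natAbs := by exact_mod_cast hle
  omega

private lemma christie_prime_pow {p : ℕ} (hp : p.Prime) (u m : Module.End ℤ A)
    (hu : u = 1 + (4 : ℤ) • m) (h1 : u ^ p = 1) :
    ∀ j : ℕ, ∃ mj : Module.End ℤ A, m = ((2 : ℤ) ^ j) • mj := by
  intro j
  induction j with
  | zero => exact ⟨m, by simp⟩
  | succ j ih =>
    obtain ⟨mj, hmj⟩ := ih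
    set c : Module.End ℤ A := ((2 : ℤ) ^ (j + 2)) • mj with hcdef
    have hu' : u = 1 + c := by
      rw [hu, hmj, smul_smul, hcdef]
      congr 1
      ring
    obtain ⟨w, hw⟩ := christie_bin c p
    have heq : (p : ℤ) • c + c ^ 2 * w = 0 := by
      have h2 : (1 : Module.End ℤ A) + p • c + c ^ 2 * w = 1 := by rw [← hw, ← hu', h1]
      have h4 : p • c + c ^ 2 * w = 0 := by
        have h2' : (1 : Module.End ℤ A) + (p • c + c ^ 2 * w) = 1 + 0 := by
          rw [← add_assoc, h2, add_zero]
        exact add_left_cancel h2'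
      rw [Nat.cast_smul_eq_nsmul]
      exact h4
    have hc2 : c ^ 2 * w = ((2 : ℤ) ^ (j + 2)) • (((2 : ℤ) ^ (j + 2)) • (mj * mj * w)) := by
      rw [hcdef, pow_two]
      simp only [smul_mul_assoc, mul_smul_comm, smul_smul]
    have hpc : (p : ℤ) • c = ((2 : ℤ) ^ (j + 2)) • ((p : ℤ) • mj) := by
      rw [hcdef, smul_comm]
    have hcancel : (p : ℤ) • mj + ((2 : ℤ) ^ (j + 2)) • (mj * mj * w) = 0 := by
      apply christie_end_smul_cancel (k := (2:ℤ) ^ (j+2)) (by positivity)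
      rw [smul_add, ← hpc, ← hc2, heq]
    have hkey : (p : ℤ) • mj = (2 : ℤ) • (-(((2 : ℤ) ^ (j + 1)) • (mj * mj * w))) := by
      have : (p : ℤ) • mj = -(((2 : ℤ) ^ (j + 2)) • (mj * mj * w)) := by
        rw [eq_neg_iff_add_eq_zero]
        exact hcancel
      rw [this, smul_neg, smul_smul]
      congr 2
      ring
    set z : Module.End ℤ A := -(((2 : ℤ) ^ (j + 1)) • (mj * mj * w)) with hz
    have heven : ∃ y : Module.End ℤ A, mj = (2 : ℤ) • y := by
      rcases hp.eq_two_or_odd' with h2 | hodd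
      · refine ⟨-(((2 : ℤ) ^ j) • (mj * mj * w)), ?_⟩
        have h2' : (2 : ℤ) • mj = (2 : ℤ) • z := by
          rw [← hkey, h2]
          norm_num
        have h0 : (2 : ℤ) • (mj - z) = 0 := by rw [smul_sub, h2', sub_self]
        have hmz := christie_end_smul_cancel (by norm_num : (2:ℤ) ≠ 0) h0
        rw [sub_eq_zero] at hmz
        conv_lhs => rw [hmz, hz]
        rw [smul_neg, smul_smul, ← pow_succ']
      · obtain ⟨k, hk⟩ := hodd
        refine ⟨z - (k : ℤ) • mj, ?_⟩
        have hcast : (p : ℤ) = 2 * (k : ℤ) + 1 := by rw [hk]; push_cast; ring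
        calc mj = ((p : ℤ) - 2 * (k : ℤ)) • mj := by rw [hcast]; norm_num
        _ = (p : ℤ) • mj - (2 * (k : ℤ)) • mj := by rw [sub_smul]
        _ = (2 : ℤ) • z - (2 : ℤ) • ((k : ℤ) • mj) := by rw [hkey, mul_smul]
        _ = (2 : ℤ) • (z - (k : ℤ) • mj) := by rw [smul_sub]
    obtain ⟨y, hy⟩ := heven
    exact ⟨y, by rw [hmj, hy, smul_smul, ← pow_succ]⟩

private lemma christie_tors [Module.Finite ℤ A] :
    ∀ e : ℕ, 0 < e → ∀ u m : Module.End ℤ A, u = 1 + (4 : ℤ) • m → u ^ e = 1 → u = 1 := by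
  intro e
  induction e using Nat.strong_induction_on with
  | _ e IH =>
    intro he u m hu h1
    rcases eq_or_lt_of_le (Nat.succ_le_of_lt he) with h | h
    · rw [← h] at h1
      simpa using h1
    · -- e ≥ 2
      have he1 : e ≠ 1 := by omega
      have hp : e.minFac.Prime := Nat.minFac_prime he1
      set p := e.minFac with hpdef
      set q := e / p with hq
      have hdvd : p ∣ e := Nat.minFac_dvd e
      have hpq : p * q = e := Nat.mul_div_cancel' hdvd
      have hq0 : 0 < q := Nat.div_pos (Nat.minFac_le he) hp.pos
      have hqe : q < e := by
        have hp2 : 2 ≤ p := hp.two_le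
        calc q = e / p := hq
        _ ≤ e / 2 := Nat.div_le_div_left hp2 (by norm_num)
        _ < e := Nat.div_lt_self he (by norm_num)
      obtain ⟨g, hg⟩ := christie_pow4 m p
      have hvq : (u ^ p) ^ q = 1 := by rw [← pow_mul, hpq, h1]
      have hv : u ^ p = 1 := IH q hqe hq0 (u ^ p) g (by rw [hu, hg]) hvq
      have hm0 : m = 0 := by
        apply christie_end_zero
        intro j
        exact christie_prime_pow hp u m hu hv j
      rw [hu, hm0, smul_zero, add_zero]

private lemma christie_invol [Module.Finite ℤ A] (u n : Module.End ℤ A)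
    (hu : u = 1 + (2 : ℤ) • n) {e : ℕ} (he : 0 < e) (h1 : u ^ e = 1) : u * u = 1 := by
  have hsq : u * u = 1 + (4 : ℤ) • (n + n * n) := by
    rw [hu]
    simp only [mul_add, add_mul, one_mul, mul_one, smul_mul_assoc, mul_smul_comm,
      smul_smul, smul_add]
    noncomm_ring
    norm_num
  have hpow : (u * u) ^ e = 1 := by
    rw [← pow_two, ← pow_mul, mul_comm 2 e, pow_mul, h1, one_pow]
  exact christie_tors e he (u * u) (n + n * n) hsq hpow

end ChristieAux

private lemma christie_basis_aux
    (Γ A : Type*) [Group Γ] [Finite Γ] [AddCommGroup A]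
    [Module.Free ℤ A] [Module.Finite ℤ A]
    (ρ : Γ → AddAut A) (hone : ρ 1 = 0) (hmul : ∀ s t, ρ (s * t) = ρ s + ρ t)
    (htriv : ∀ (τ : Γ) (a : A), ∃ b : A, ρ τ a - a = 2 • b) :
    ∃ (t : ℕ) (Bs : Module.Basis (Fin t) ℤ A),
      ∀ (τ : Γ) (i : Fin t), ρ τ (Bs i) = Bs i ∨ ρ τ (Bs i) = -(Bs i) := by
  classical
  cases nonempty_fintype Γ
  -- the action as ring elements
  set E : Γ → Module.End ℤ A := fun τ => (AddEquiv.toAddMonoidHom (ρ τ)).toIntLinearMap with hE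
  have Eapp : ∀ τ (a : A), E τ a = ρ τ a := fun _ _ => rfl
  have Eone : E 1 = 1 := by
    ext a
    show ρ 1 a = a
    rw [hone]
    rfl
  have Emul : ∀ s t, E (s * t) = E s * E t := by
    intro s t
    ext a
    show ρ (s * t) a = ρ s (ρ t a)
    rw [hmul]
    rfl
  have Epow : ∀ τ (n : ℕ), E τ ^ n = E (τ ^ n) := by
    intro τ n
    induction n with
    | zero => simpa using Eone.symm
    | succ n ih => rw [pow_succ, ih, ← Emul, ← pow_succ]
  have Ecard : ∀ τ, E τ ^ (Nat.card Γ) = 1 := by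
    intro τ
    rw [Epow, pow_card_eq_one', Eone]
  have hcard : 0 < Nat.card Γ := Nat.card_pos
  have Ehalf : ∀ τ, ∃ n, E τ = 1 + (2 : ℤ) • n := by
    intro τ
    obtain ⟨n, hn⟩ := christie_halve (E τ - 1) (fun a => by
      obtain ⟨b, hb⟩ := htriv τ a
      refine ⟨b, ?_⟩
      show E τ a - a = (2 : ℤ) • b
      rw [Eapp, hb, two_zsmul, two_nsmul])
    exact ⟨n, by rw [← hn]; abel⟩
  have Esq : ∀ τ, E τ * E τ = 1 := by
    intro τ
    obtain ⟨n, hn⟩ := Ehalf τ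
    exact christie_invol (E τ) n hn hcard (Ecard τ)
  have sqApp : ∀ τ (a : A), ρ τ (ρ τ a) = a := by
    intro τ a
    have h := congrFun (congrArg DFunLike.coe (Esq τ)) a
    simpa [Module.End.mul_apply, Eapp] using h
  have comm : ∀ s t, E s * E t = E t * E s := by
    intro s t
    have hx := Esq s
    have hy := Esq t
    have hxy : E s * E t * (E s * E t) = 1 := by rw [← Emul]; exact Esq (s * t)
    have hcalc : E t * E s = E s * E t :=
      calc E t * E s
          = (E s * E s) * (E t * E s) * (E t * E t) := by rw [hx, hy, one_mul, mul_one]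
        _ = E s * (E s * E t * (E s * E t)) * E t := by noncomm_ring
        _ = E s * E t := by rw [hxy, mul_one]
    exact hcalc.symm
  have commApp : ∀ s t (a : A), ρ s (ρ t a) = ρ t (ρ s a) := by
    intro s t a
    have h := congrFun (congrArg DFunLike.coe (comm s t)) a
    simpa [Module.End.mul_apply, Eapp] using h
  -- simultaneous eigenspaces
  let eig : (Γ → ℤˣ) → Submodule ℤ A := fun χ =>
    { carrier := {a | ∀ τ, ρ τ a = ((χ τ : ℤ)) • a}
      add_mem' := fun ha hb τ => by rw [map_add, ha τ, hb τ, smul_add]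
      zero_mem' := fun τ => by rw [map_zero, smul_zero]
      smul_mem' := fun c a ha τ => by rw [map_zsmul, ha τ, smul_comm] }
  have mem_eig : ∀ (χ : Γ → ℤˣ) (x : A), x ∈ eig χ ↔ ∀ τ, ρ τ x = ((χ τ : ℤ)) • x :=
    fun _ _ => Iff.rfl
  -- splitting elements
  have split : ∀ (τ : Γ) (a : A), ∃ b : A, ρ τ a = a + (2 : ℤ) • b ∧ ρ τ b = -b ∧
      ∀ (s : Γ) (u : ℤ), ρ s a = u • a → ρ s b = u • b := by
    intro τ a
    obtain ⟨b, hb⟩ := htriv τ a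
    have hb2 : (2 : ℤ) • b = ρ τ a - a := by rw [two_zsmul, ← two_nsmul, ← hb]
    have hb1 : ρ τ a = a + (2 : ℤ) • b := by rw [hb2]; abel
    refine ⟨b, hb1, ?_, ?_⟩
    · have h2 : ρ τ (ρ τ a) = a := sqApp τ a
      rw [hb1, map_add, map_zsmul, hb1] at h2
      have h3 : a + ((2 : ℤ) • b + (2 : ℤ) • ρ τ b) = a + 0 := by
        rw [add_zero, ← add_assoc]
        exact h2
      have h4 : (2 : ℤ) • (b + ρ τ b) = 0 := by
        rw [smul_add]
        exact add_left_cancel h3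
      have h5 := christie_smul_cancel (by norm_num : (2:ℤ) ≠ 0) h4
      exact eq_neg_of_add_eq_zero_right h5
    · intro s u hu
      have h5 : (2 : ℤ) • ρ s b = (2 : ℤ) • (u • b) := by
        calc (2 : ℤ) • ρ s b = ρ s ((2 : ℤ) • b) := (map_zsmul _ _ _).symm
          _ = ρ s (ρ τ a - a) := by rw [hb2]
          _ = ρ τ (ρ s a) - ρ s a := by rw [map_sub, commApp s τ a]
          _ = ρ τ (u • a) - u • a := by rw [hu]
          _ = u • (ρ τ a - a) := by rw [map_zsmul, smul_sub]
          _ = u • ((2 : ℤ) • b) := by rw [hb2]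
          _ = (2 : ℤ) • (u • b) := smul_comm u (2 : ℤ) b
      exact smul_right_injective A (by norm_num : (2:ℤ) ≠ 0) h5
  -- spanning
  have hspan : (⨆ χ : Γ → ℤˣ, eig χ) = ⊤ := by
    rw [eq_top_iff]
    have key : ∀ T : Finset Γ, ∀ (χ : Γ → ℤˣ) (a : A),
        (∀ τ ∈ Tᶜ, ρ τ a = ((χ τ : ℤ)) • a) → a ∈ ⨆ χ' : Γ → ℤˣ, eig χ' := by
      intro T
      induction T using Finset.induction_on with
      | empty =>
        intro χ a ha
        exact Submodule.mem_iSup_of_mem χ (fun τ => ha τ (by simp))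
      | @insert τ T hτ ih =>
        intro χ a ha
        obtain ⟨b, hb1, hb2, hb3⟩ := split τ a
        have hmem : ∀ s ∈ Tᶜ, s ≠ τ → ρ s a = ((χ s : ℤ)) • a := by
          intro s hs hsne
          refine ha s ?_
          rw [Finset.mem_compl] at hs ⊢
          rw [Finset.mem_insert]
          tauto
        have h1 : a + b ∈ ⨆ χ' : Γ → ℤˣ, eig χ' := by
          apply ih (Function.update χ τ 1)
          intro s hs
          by_cases hsτ : s = τ
          · subst hsτ
            rw [Function.update_self, map_add, hb1, hb2, Units.val_one, one_smul]
            abel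
          · rw [Function.update_of_ne hsτ, map_add,
              hmem s hs hsτ, hb3 s _ (hmem s hs hsτ), smul_add]
        have h2 : -b ∈ ⨆ χ' : Γ → ℤˣ, eig χ' := by
          apply ih (Function.update χ τ (-1))
          intro s hs
          by_cases hsτ : s = τ
          · subst hsτ
            rw [Function.update_self, map_neg, hb2, neg_neg, Units.val_neg, Units.val_one,
              neg_smul, one_smul, neg_neg]
          · rw [Function.update_of_ne hsτ, map_neg, hb3 s _ (hmem s hs hsτ), smul_neg]
        have hsum : a = (a + b) + (-b) := by abel
        rw [hsum]
        exact Submodule.add_mem _ h1 h2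
    intro a _
    exact key Finset.univ (fun _ => 1) a (by simp)
  -- independence
  have hind : iSupIndep eig := by
    intro χ
    rw [Submodule.disjoint_def]
    intro x hx hx'
    set l : List Γ := Finset.univ.toList with hl
    set fact : Γ → Module.End ℤ A := fun τ => 1 + (χ τ : ℤ) • E τ with hfact
    have L1 : ∀ (L : List Γ) (χ' : Γ → ℤˣ) (y : A), (∀ τ, ρ τ y = ((χ' τ : ℤ)) • y) →
        (L.map fact).prod y = ((L.map (fun τ => 1 + (χ τ : ℤ) * (χ' τ : ℤ))).prod) • y := by
      intro L
      induction L with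
      | nil => intro χ' y hy; simp
      | cons τ L ih =>
        intro χ' y hy
        rw [List.map_cons, List.prod_cons, List.map_cons, List.prod_cons,
          Module.End.mul_apply, ih χ' y hy, LinearMap.map_smul]
        have hf : fact τ y = (1 + (χ τ : ℤ) * (χ' τ : ℤ)) • y := by
          rw [hfact]
          simp only [LinearMap.add_apply, Module.End.one_apply, LinearMap.smul_apply]
          rw [Eapp, hy τ, smul_smul, add_smul, one_smul]
        rw [hf, smul_smul]
        congr 1
        ring
    have hx2 : (l.map fact).prod x = ((2 : ℤ) ^ l.length) • x := by
      rw [L1 l χ x hx]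
      congr 1
      have hmapeq : l.map (fun τ => 1 + (χ τ : ℤ) * (χ τ : ℤ)) = l.map (fun _ => (2 : ℤ)) := by
        apply List.map_congr_left
        intro τ _
        have : (χ τ : ℤ) * (χ τ : ℤ) = 1 := by
          rw [← Units.val_mul, Int.units_mul_self, Units.val_one]
        rw [this]
        norm_num
      rw [hmapeq, List.map_const', List.prod_replicate]
    have hker : (l.map fact).prod x = 0 := by
      have hle : (⨆ χ', ⨆ (_ : χ' ≠ χ), eig χ') ≤ LinearMap.ker ((l.map fact).prod) := by
        refine iSup_le fun χ' => iSup_le fun hne => ?_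
        intro y hy
        rw [LinearMap.mem_ker, L1 l χ' y hy]
        obtain ⟨τ₀, hτ₀⟩ := Function.ne_iff.mp hne
        have hzero : (1 + (χ τ₀ : ℤ) * (χ' τ₀ : ℤ)) = 0 := by
          rcases Int.units_eq_one_or (χ τ₀) with h1 | h1 <;>
            rcases Int.units_eq_one_or (χ' τ₀) with h2 | h2
          · exact absurd (h2.trans h1.symm) hτ₀
          · rw [h1, h2]; norm_num
          · rw [h1, h2]; norm_num
          · exact absurd (h2.trans h1.symm) hτ₀
        have hmemmap : (0 : ℤ) ∈ l.map (fun τ => 1 + (χ τ : ℤ) * (χ' τ : ℤ)) :=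
          List.mem_map.mpr ⟨τ₀, Finset.mem_toList.mpr (Finset.mem_univ τ₀), hzero⟩
        rw [List.prod_eq_zero hmemmap, zero_smul]
      exact hle hx'
    have h0 : ((2 : ℤ) ^ l.length) • x = 0 := by rw [← hx2, hker]
    exact christie_smul_cancel (by positivity) h0
  -- assemble the basis
  have hint : DirectSum.IsInternal eig :=
    (DirectSum.isInternal_submodule_iff_iSupIndep_and_iSup_eq_top eig).mpr ⟨hind, hspan⟩
  let bχ : (χ : Γ → ℤˣ) → Module.Basis (Module.Free.ChooseBasisIndex ℤ (eig χ)) ℤ (eig χ) :=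
    fun χ => Module.Free.chooseBasis ℤ (eig χ)
  let B := hint.collectedBasis bχ
  let e := Fintype.equivFin ((χ : Γ → ℤˣ) × Module.Free.ChooseBasisIndex ℤ (eig χ))
  refine ⟨_, B.reindex e, ?_⟩
  intro τ i
  have hBi : (B.reindex e) i = B (e.symm i) := B.reindex_apply e i
  have hmemB : B (e.symm i) ∈ eig (e.symm i).1 := hint.collectedBasis_mem bχ (e.symm i)
  have hρ : ρ τ (B (e.symm i)) = (((e.symm i).1 τ : ℤ)) • B (e.symm i) :=
    (mem_eig _ _).mp hmemB τ
  rcases Int.units_eq_one_or ((e.symm i).1 τ) with h1 | h1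
  · left
    rw [hBi, hρ, h1, Units.val_one, one_smul]
  · right
    rw [hBi, hρ, h1, Units.val_neg, Units.val_one, neg_smul, one_smul]

theorem christie_basis
    (Γ A : Type*) [Group Γ] [Finite Γ] [AddCommGroup A]
    [Module.Free ℤ A] [Module.Finite ℤ A]
    (ρ : Γ →* Multiplicative (AddAut A))
    (htriv : ∀ (τ : Γ) (a : A), ∃ b : A, Multiplicative.toAdd (ρ τ) a - a = 2 • b) :
    ∃ (t : ℕ) (Bs : Module.Basis (Fin t) ℤ A),
      ∀ (τ : Γ) (i : Fin t), Multiplicative.toAdd (ρ τ) (Bs i) = Bs i ∨ Multiplicative.toAdd (ρ τ) (Bs i) = -(Bs i) := by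
  exact christie_basis_aux Γ A (fun τ => Multiplicative.toAdd (ρ τ)) (by simp)
    (fun s t => by simp [map_mul]) htriv
end

section
/- Let K be a field with a discrete valuation v, let g ≥ 1, and let T, z ∈ K× and f₁, …, f_{2g−1} ∈ K satisfy v(T) = 0 and v(f_j) ≥ 0 for all j. If the valuation of the product z · ( T + z^{2g} + Σ_{j=1}^{2g−1} f_j z^j ) is even (and the expression in parentheses is nonzero), then v(z) is even. -/
theorem valuation_of_z_even
    (K : Type*) [Field K] (v : K → WithTop ℤ)
    (hv0 : ∀ x : K, v x = ⊤ ↔ x = 0)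
    (hvmul : ∀ x y : K, v (x * y) = v x + v y)
    (hvadd : ∀ x y : K, min (v x) (v y) ≤ v (x + y))
    (hvne : ∀ x y : K, v x ≠ v y → v (x + y) = min (v x) (v y))
    (g : ℕ) (hg : 1 ≤ g) (T z : K) (f : ℕ → K)
    (hT : v T = 0) (hz : z ≠ 0)
    (hf : ∀ j, 0 ≤ v (f j))
    (hnz : T + z ^ (2 * g) + ∑ j ∈ Finset.Icc 1 (2 * g - 1), f j * z ^ j ≠ 0)
    (heven : ∃ m : ℤ,
      v (z * (T + z ^ (2 * g) + ∑ j ∈ Finset.Icc 1 (2 * g - 1), f j * z ^ j))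
        = ((2 * m : ℤ) : WithTop ℤ)) :
    ∃ m : ℤ, v z = ((2 * m : ℤ) : WithTop ℤ) := by
  obtain ⟨m, hm⟩ := heven
  have hv1 : v 1 = 0 := by
    have h := hvmul 1 1
    rw [one_mul] at h
    have h1 : v 1 ≠ ⊤ := by simp [hv0]
    obtain ⟨k, hk⟩ := WithTop.ne_top_iff_exists.mp h1
    rw [← hk] at h ⊢
    have hk2 : k = k + k := by exact_mod_cast h
    have : k = 0 := by omega
    simp [this]
  have hvzt : v z ≠ ⊤ := by simp [hv0, hz]
  obtain ⟨n, hn⟩ := WithTop.ne_top_iff_exists.mp hvzt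
  have hpow : ∀ k : ℕ, v (z ^ k) = (((k : ℤ) * n : ℤ) : WithTop ℤ) := by
    intro k
    induction k with
    | zero => simpa using hv1
    | succ k ih =>
      rw [pow_succ, hvmul, ih, ← hn, ← WithTop.coe_add]
      congr 1
      push_cast
      ring
  have hterm : ∀ j : ℕ, (((j : ℤ) * n : ℤ) : WithTop ℤ) ≤ v (f j * z ^ j) := by
    intro j
    rw [hvmul, hpow]
    calc (((j : ℤ) * n : ℤ) : WithTop ℤ) = 0 + (((j : ℤ) * n : ℤ) : WithTop ℤ) := by simp
    _ ≤ v (f j) + (((j : ℤ) * n : ℤ) : WithTop ℤ) := add_le_add_left (hf j) _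
  have hsum : ∀ (c : ℤ) (s : Finset ℕ), (∀ j ∈ s, (c : WithTop ℤ) ≤ v (f j * z ^ j)) →
      (c : WithTop ℤ) ≤ v (∑ j ∈ s, f j * z ^ j) := by
    intro c s
    induction s using Finset.cons_induction with
    | empty =>
      intro _
      have h0 : v (0 : K) = ⊤ := (hv0 0).mpr rfl
      simp [h0]
    | cons a s ha ih =>
      intro hs
      rw [Finset.sum_cons]
      refine le_trans (le_min (hs a (Finset.mem_cons_self a s)) (ih ?_)) (hvadd _ _)
      intro j hj
      exact hs j (Finset.mem_cons_of_mem hj)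
  set S := ∑ j ∈ Finset.Icc 1 (2 * g - 1), f j * z ^ j with hS
  have hg' : (1 : ℤ) ≤ (g : ℤ) := by exact_mod_cast hg
  rcases lt_trichotomy n 0 with hneg | h0 | hpos
  · -- n < 0
    have hZ : v (z ^ (2 * g)) = ((2 * (g : ℤ) * n : ℤ) : WithTop ℤ) := by
      rw [hpow]; exact_mod_cast rfl
    have hTS : (((2 * (g : ℤ) - 1) * n : ℤ) : WithTop ℤ) ≤ v (T + S) := by
      refine le_trans (le_min ?_ (hsum _ _ ?_)) (hvadd T S)
      · rw [hT]
        exact_mod_cast (by nlinarith : (2 * (g : ℤ) - 1) * n ≤ 0)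
      · intro j hj
        refine le_trans ?_ (hterm j)
        have hj2 : (j : ℤ) ≤ 2 * (g : ℤ) - 1 := by
          have h2 := (Finset.mem_Icc.mp hj).2
          omega
        exact_mod_cast (by nlinarith : (2 * (g : ℤ) - 1) * n ≤ (j : ℤ) * n)
    have hlt : v (z ^ (2 * g)) < v (T + S) := by
      rw [hZ]
      refine lt_of_lt_of_le ?_ hTS
      exact_mod_cast (by nlinarith : 2 * (g : ℤ) * n < (2 * (g : ℤ) - 1) * n)
    have hre : T + z ^ (2 * g) + S = z ^ (2 * g) + (T + S) := by ring
    have hW : v (T + z ^ (2 * g) + S) = ((2 * (g : ℤ) * n : ℤ) : WithTop ℤ) := by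
      rw [hre, hvne _ _ (ne_of_lt hlt), min_eq_left (le_of_lt hlt), hZ]
    rw [hvmul, hW, ← hn, ← WithTop.coe_add] at hm
    have hint : n + 2 * (g : ℤ) * n = 2 * m := by exact_mod_cast hm
    refine ⟨m - (g : ℤ) * n, ?_⟩
    rw [← hn]
    norm_cast
    linarith
  · exact ⟨0, by rw [← hn, h0]; norm_num⟩
  · -- n > 0
    have hR : (n : WithTop ℤ) ≤ v (z ^ (2 * g) + S) := by
      refine le_trans (le_min ?_ (hsum _ _ ?_)) (hvadd _ _)
      · rw [hpow]
        have : ((2 * g : ℕ) : ℤ) = 2 * (g : ℤ) := by push_cast; ring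
        rw [this]
        exact_mod_cast (by nlinarith : n ≤ 2 * (g : ℤ) * n)
      · intro j hj
        refine le_trans ?_ (hterm j)
        have hj1 : (1 : ℤ) ≤ (j : ℤ) := by exact_mod_cast (Finset.mem_Icc.mp hj).1
        exact_mod_cast (by nlinarith : n ≤ (j : ℤ) * n)
    have hne : v T ≠ v (z ^ (2 * g) + S) := by
      rw [hT]
      intro h
      have : (n : WithTop ℤ) ≤ ((0 : ℤ) : WithTop ℤ) := by rw [← h] at hR; exact_mod_cast hR
      have : n ≤ 0 := by exact_mod_cast this
      omega
    have hW : v (T + z ^ (2 * g) + S) = 0 := by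
      rw [add_assoc, hvne _ _ hne, hT]
      refine min_eq_left ?_
      refine le_trans ?_ hR
      exact_mod_cast (by omega : (0 : ℤ) ≤ n)
    rw [hvmul, hW, ← hn, add_zero] at hm
    have hint : n = 2 * m := by exact_mod_cast hm
    exact ⟨m, by rw [← hn]; exact_mod_cast hint⟩
end

section
/- Let K be a field with a discrete valuation v with valuation ring O, maximal ideal m, uniformizer p, and residue field O/m. Let A ∈ K× with v(A) even and such that the residue class of p^{−v(A)}·A in O/m is not a square. Then for all u₀, u₁ ∈ K not both zero, the valuation v(u₀² − A·u₁²) is even. -/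
theorem valuation_norm_quadratic_even_nonsquare_case
    (K : Type*) [Field K] (v : K → ℤ)
    (hvmul : ∀ x y : K, x ≠ 0 → y ≠ 0 → v (x * y) = v x + v y)
    (hvadd : ∀ x y : K, x ≠ 0 → y ≠ 0 → x + y ≠ 0 → min (v x) (v y) ≤ v (x + y))
    (hvne : ∀ x y : K, x ≠ 0 → y ≠ 0 → v x ≠ v y →
      x + y ≠ 0 ∧ v (x + y) = min (v x) (v y))
    (p : K) (hp : p ≠ 0) (hpv : v p = 1)
    (A : K) (hA : A ≠ 0) (hAeven : Even (v A))
    (hnonsquare : ∀ y : K, (y = 0 ∨ 0 ≤ v y) →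
      p ^ (-(v A)) * A - y ^ 2 ≠ 0 ∧ v (p ^ (-(v A)) * A - y ^ 2) = 0) :
    ∀ u₀ u₁ : K, ¬(u₀ = 0 ∧ u₁ = 0) →
      u₀ ^ 2 - A * u₁ ^ 2 ≠ 0 ∧ Even (v (u₀ ^ 2 - A * u₁ ^ 2)) := by
  have hv1 : v 1 = 0 := by
    have := hvmul 1 1 one_ne_zero one_ne_zero
    rw [mul_one] at this; omega
  have hvinv : ∀ x : K, x ≠ 0 → v x⁻¹ = -v x := by
    intro x hx
    have := hvmul x x⁻¹ hx (inv_ne_zero hx)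
    rw [mul_inv_cancel₀ hx, hv1] at this; omega
  have hvneg : ∀ x : K, x ≠ 0 → v (-x) = v x := by
    intro x hx
    have h1 : v (-1 : K) = 0 := by
      have := hvmul (-1) (-1) (by norm_num) (by norm_num)
      rw [neg_mul_neg, mul_one, hv1] at this; omega
    have := hvmul (-1) x (by norm_num) hx
    rw [neg_one_mul, h1] at this; omega
  have hvsq : ∀ x : K, x ≠ 0 → v (x ^ 2) = 2 * v x := by
    intro x hx
    rw [sq, hvmul x x hx hx]; ring
  have hvpz : ∀ k : ℤ, v (p ^ k) = k := by
    intro k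
    induction k using Int.induction_on with
    | zero => simpa using hv1
    | succ k ih =>
        rw [zpow_add_one₀ hp, hvmul _ _ (zpow_ne_zero _ hp) hp, ih, hpv]
    | pred k ih =>
        rw [zpow_sub_one₀ hp, hvmul _ _ (zpow_ne_zero _ hp) (inv_ne_zero hp), ih,
          hvinv p hp, hpv]; omega
  intro u₀ u₁ h
  by_cases hu₁ : u₁ = 0
  · have hu₀ : u₀ ≠ 0 := fun h0 => h ⟨h0, hu₁⟩
    subst hu₁
    rw [show u₀ ^ 2 - A * (0:K) ^ 2 = u₀ ^ 2 by ring]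
    exact ⟨pow_ne_zero _ hu₀, ⟨v u₀, by rw [hvsq _ hu₀]; ring⟩⟩
  by_cases hu₀ : u₀ = 0
  · subst hu₀
    rw [show (0:K) ^ 2 - A * u₁ ^ 2 = -(A * u₁ ^ 2) by ring]
    have hne : A * u₁ ^ 2 ≠ 0 := mul_ne_zero hA (pow_ne_zero _ hu₁)
    obtain ⟨m, hm⟩ := hAeven
    refine ⟨neg_ne_zero.mpr hne, ?_⟩
    rw [hvneg _ hne, hvmul _ _ hA (pow_ne_zero _ hu₁), hvsq _ hu₁]
    exact ⟨m + v u₁, by omega⟩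
  -- both nonzero
  have hAu : A * u₁ ^ 2 ≠ 0 := mul_ne_zero hA (pow_ne_zero _ hu₁)
  have hvAu : v (A * u₁ ^ 2) = v A + 2 * v u₁ := by
    rw [hvmul _ _ hA (pow_ne_zero _ hu₁), hvsq _ hu₁]
  obtain ⟨m, hm⟩ := hAeven
  by_cases hvv : v (u₀ ^ 2) = v (A * u₁ ^ 2)
  · -- equal valuations: use the nonsquare hypothesis
    have hden : u₁ * p ^ m ≠ 0 := mul_ne_zero hu₁ (zpow_ne_zero _ hp)
    set y : K := u₀ * (u₁ * p ^ m)⁻¹ with hy_def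
    have hy : (u₁ * p ^ m) * y = u₀ := by
      rw [hy_def]; field_simp
    have hvy : v y = 0 := by
      rw [hy_def, hvmul _ _ hu₀ (inv_ne_zero hden), hvinv _ hden,
        hvmul _ _ hu₁ (zpow_ne_zero _ hp), hvpz]
      rw [hvsq _ hu₀] at hvv
      omega
    have hkey := hnonsquare y (Or.inr (le_of_eq hvy.symm))
    have hpn : (p ^ m) ^ 2 * p ^ (-(v A)) = 1 := by
      rw [sq, ← zpow_add₀ hp, ← zpow_add₀ hp, show m + m + -(v A) = 0 by omega,
        zpow_zero]
    have hid : u₀ ^ 2 - A * u₁ ^ 2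
        = -((u₁ * p ^ m) ^ 2 * (p ^ (-(v A)) * A - y ^ 2)) := by
      have h1 : -((u₁ * p ^ m) ^ 2 * (p ^ (-(v A)) * A - y ^ 2))
          = -(u₁ ^ 2 * ((p ^ m) ^ 2 * p ^ (-(v A))) * A) + ((u₁ * p ^ m) * y) ^ 2 := by
        ring
      rw [h1, hpn, hy]; ring
    rw [hid]
    have hsqne : (u₁ * p ^ m) ^ 2 ≠ 0 := pow_ne_zero _ hden
    have hprodne : (u₁ * p ^ m) ^ 2 * (p ^ (-(v A)) * A - y ^ 2) ≠ 0 :=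
      mul_ne_zero hsqne hkey.1
    refine ⟨neg_ne_zero.mpr hprodne, ?_⟩
    rw [hvneg _ hprodne, hvmul _ _ hsqne hkey.1, hkey.2, hvsq _ hden,
      hvmul _ _ hu₁ (zpow_ne_zero _ hp), hvpz]
    exact ⟨v u₁ + m, by ring⟩
  · -- distinct valuations: ultrametric equality
    have hvneg' : v (-(A * u₁ ^ 2)) = v (A * u₁ ^ 2) := hvneg _ hAu
    have hne' : v (u₀ ^ 2) ≠ v (-(A * u₁ ^ 2)) := by rw [hvneg']; exact hvv
    have := hvne (u₀ ^ 2) (-(A * u₁ ^ 2)) (pow_ne_zero _ hu₀)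
      (neg_ne_zero.mpr hAu) hne'
    rw [show u₀ ^ 2 + -(A * u₁ ^ 2) = u₀ ^ 2 - A * u₁ ^ 2 by ring] at this
    refine ⟨this.1, ?_⟩
    rw [this.2, hvneg', hvsq _ hu₀, hvAu]
    rcases le_total (2 * v u₀) (v A + 2 * v u₁) with hle | hle
    · rw [min_eq_left hle]; exact ⟨v u₀, by ring⟩
    · rw [min_eq_right hle]; exact ⟨m + v u₁, by omega⟩
end

section
/- Let k be a field of characteristic 0 and S, T ∈ k[x] with T(S²−4T) ≠ 0. Suppose α, β ∈ k(x) satisfy β² = α(α² + Sα + T) with (α, β) ≠ (0, 0). Then there exist a constant ε ∈ k×, a monic squarefree polynomial μ ∈ k[x] dividing T, and polynomials θ, ψ, ν ∈ k[x] with μθ coprime to ψ, such that α = ε·μ·θ²/ψ² and ε·μ·ν² = ε²μ²θ⁴ + S·ε·μ·θ²ψ² + T·ψ⁴. -/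
open Polynomial

/-- Squarefree decomposition in `k[x]`: every nonzero polynomial is a unit times a
monic squarefree polynomial times a square. -/
lemma exists_sf_decomp {k : Type*} [Field k] :
    ∀ (n : ℕ) (a : Polynomial k), a ≠ 0 → a.natDegree ≤ n →
      ∃ (e : k) (s t : Polynomial k), e ≠ 0 ∧ s.Monic ∧ Squarefree s ∧ a = C e * s * t ^ 2 := by
  intro n
  induction n using Nat.strong_induction_on with
  | _ n ih =>
    intro a ha hdeg
    have hlc : a.leadingCoeff ≠ 0 := leadingCoeff_ne_zero.mpr ha
    by_cases hsf : Squarefree a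
    · refine ⟨a.leadingCoeff, a * C a.leadingCoeff⁻¹, 1, hlc,
        monic_mul_leadingCoeff_inv ha, ?_, ?_⟩
      · exact hsf.squarefree_of_dvd ⟨C a.leadingCoeff, by
          rw [mul_assoc, ← C_mul, inv_mul_cancel₀ hlc, C_1, mul_one]⟩
      · rw [one_pow, mul_one, ← mul_assoc, mul_comm (C a.leadingCoeff), mul_assoc,
          ← C_mul, mul_inv_cancel₀ hlc, C_1, mul_one]
    · rw [Squarefree] at hsf
      push_neg at hsf
      obtain ⟨p, hp2, hpu⟩ := hsf
      obtain ⟨q, hq⟩ := hp2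
      have hp0 : p ≠ 0 := by
        rintro rfl
        simp only [mul_zero, zero_mul] at hq
        exact ha hq
      have hq0 : q ≠ 0 := by
        rintro rfl
        simp only [mul_zero] at hq
        exact ha hq
      have hpd : 1 ≤ p.natDegree := by
        rcases Nat.eq_zero_or_pos p.natDegree with h | h
        · obtain ⟨c, hc⟩ := natDegree_eq_zero.mp h
          exact absurd (hc ▸ (isUnit_C.mpr (isUnit_iff_ne_zero.mpr
            (fun h0 => hp0 (by rw [← hc, h0, C_0]))))) hpu
        · exact h
      have hdq : q.natDegree < n := by
        have : a.natDegree = p.natDegree + p.natDegree + q.natDegree := by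
          rw [hq, natDegree_mul (mul_ne_zero hp0 hp0) hq0, natDegree_mul hp0 hp0]
        omega
      obtain ⟨e, s, t, he, hsm, hssf, hqeq⟩ := ih q.natDegree hdq q hq0 le_rfl
      exact ⟨e, s, p * t, he, hsm, hssf, by rw [hq, hqeq]; ring⟩

lemma exists_sf_decomp' {k : Type*} [Field k] (a : Polynomial k) (ha : a ≠ 0) :
    ∃ (e : k) (s t : Polynomial k), e ≠ 0 ∧ s.Monic ∧ Squarefree s ∧ a = C e * s * t ^ 2 :=
  exists_sf_decomp a.natDegree a ha le_rfl

theorem elliptic_point_shape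
    (k : Type*) [Field k] [CharZero k]
    (S T : Polynomial k) (hT : T * (S ^ 2 - 4 * T) ≠ 0)
    (α β : RatFunc k)
    (hcurve : β ^ 2 = α * (α ^ 2
        + algebraMap (Polynomial k) (RatFunc k) S * α
        + algebraMap (Polynomial k) (RatFunc k) T))
    (hne : ¬(α = 0 ∧ β = 0)) :
    ∃ (ε : k) (μ θ ψ ν : Polynomial k),
      ε ≠ 0 ∧ μ.Monic ∧ Squarefree μ ∧ μ ∣ T ∧
      IsCoprime (μ * θ) ψ ∧
      α = algebraMap (Polynomial k) (RatFunc k) (C ε * μ * θ ^ 2) /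
            algebraMap (Polynomial k) (RatFunc k) (ψ ^ 2) ∧
      C ε * μ * ν ^ 2 =
        C ε ^ 2 * μ ^ 2 * θ ^ 4 + S * (C ε * μ) * θ ^ 2 * ψ ^ 2 + T * ψ ^ 4 := by
  classical
  set i := algebraMap (Polynomial k) (RatFunc k) with hi
  have hinj : Function.Injective i := IsFractionRing.injective _ _
  have hα : α ≠ 0 := by
    intro h
    apply hne
    refine ⟨h, ?_⟩
    have hb2 : β ^ 2 = 0 := by rw [hcurve, h]; ring
    exact pow_eq_zero_iff two_ne_zero |>.mp hb2
  set a := α.num with ha_def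
  set b := α.denom with hb_def
  have hab : IsCoprime a b := α.isCoprime_num_denom
  have hb0 : b ≠ 0 := α.denom_ne_zero
  have ha0 : a ≠ 0 := RatFunc.num_ne_zero hα
  have hbm : b.Monic := α.monic_denom
  have hib : i b ≠ 0 := RatFunc.algebraMap_ne_zero hb0
  have hαab : α = i a / i b := (RatFunc.num_div_denom α).symm
  have hia : i a = α * i b := by
    rw [hαab, div_mul_cancel₀ _ hib]
  -- key identity
  have key : (β * i b ^ 2) ^ 2 = i (a * b * (a ^ 2 + S * a * b + T * b ^ 2)) := by
    simp only [map_mul, map_add, map_pow, hia]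
    rw [mul_pow, hcurve]
    ring
  -- β * i b ^ 2 is a polynomial
  have hint : IsIntegral (Polynomial k) (β * i b ^ 2) := by
    refine ⟨X ^ 2 - C (a * b * (a ^ 2 + S * a * b + T * b ^ 2)),
      monic_X_pow_sub_C _ two_ne_zero, ?_⟩
    simp only [eval₂_sub, eval₂_pow, eval₂_X, eval₂_C]
    rw [key]
    ring
  obtain ⟨c, hc⟩ := IsIntegrallyClosed.isIntegral_iff.mp hint
  have hc2 : c ^ 2 = a * b * (a ^ 2 + S * a * b + T * b ^ 2) := by
    apply hinj
    rw [map_pow, hc, key]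
  -- b is coprime to the rest
  have hba : IsCoprime b a := hab.symm
  have hbE : IsCoprime b (a * (a ^ 2 + S * a * b + T * b ^ 2)) := by
    apply hba.mul_right
    have h1 : a ^ 2 + S * a * b + T * b ^ 2 = a ^ 2 + b * (S * a + T * b) := by ring
    rw [h1]
    exact (hba.pow_right).add_mul_left_right _
  -- b is a square of a monic polynomial
  have hsq : b * (a * (a ^ 2 + S * a * b + T * b ^ 2)) = c ^ 2 := by rw [hc2]; ring
  obtain ⟨ψ₀, u, hu⟩ := exists_associated_pow_of_mul_eq_pow' hbE hsq
  obtain ⟨e0, he0u, he0⟩ := Polynomial.isUnit_iff.mp u.isUnit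
  have hψ₀0 : ψ₀ ≠ 0 := by
    rintro rfl
    rw [← hu] at hb0
    simp at hb0
  set l := ψ₀.leadingCoeff with hl_def
  have hl0 : l ≠ 0 := leadingCoeff_ne_zero.mpr hψ₀0
  have hbu : b = ψ₀ ^ 2 * C e0 := by rw [he0, hu]
  have hel : l * l * e0 = 1 := by
    have h1 : b.leadingCoeff = 1 := hbm
    rw [hbu, leadingCoeff_mul, leadingCoeff_pow, leadingCoeff_C] at h1
    rw [← h1]; ring
  set ψ := C l⁻¹ * ψ₀ with hψ_def
  have hψ2 : ψ ^ 2 = b := by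
    rw [hψ_def, hbu]
    have he0' : e0 = l⁻¹ * l⁻¹ := by
      field_simp
      linear_combination hel
    rw [he0', C_mul]
    ring
  have hψm : ψ.Monic := by
    have : ψ.leadingCoeff = 1 := by
      rw [hψ_def, leadingCoeff_mul, leadingCoeff_C, ← hl_def, inv_mul_cancel₀ hl0]
    exact this
  have hψ0 : ψ ≠ 0 := hψm.ne_zero
  have hcop_aψ : IsCoprime a ψ := by
    have := hψ2 ▸ hab
    exact (IsCoprime.pow_right_iff two_pos).mp this
  -- divide out ψ from c
  set E := a ^ 2 + S * a * ψ ^ 2 + T * ψ ^ 4 with hE_def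
  have hc2' : c ^ 2 = ψ ^ 2 * (a * E) := by
    rw [hc2, ← hψ2, hE_def]; ring
  have hψc : ψ ∣ c := (IsIntegrallyClosed.pow_dvd_pow_iff two_ne_zero).mp ⟨a * E, hc2'⟩
  obtain ⟨d, hd⟩ := hψc
  have hd2 : d ^ 2 = a * E := by
    apply mul_left_cancel₀ (pow_ne_zero 2 hψ0)
    rw [← hc2', hd]; ring
  by_cases hE0 : E = 0
  · -- degenerate case : α is a root of the quadratic
    obtain ⟨ε, μ, θ, hε, hμm, hμsf, haeq⟩ := exists_sf_decomp' a ha0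
    have hμa : μ ∣ a := ⟨C ε * θ ^ 2, by rw [haeq]; ring⟩
    have haT : a ∣ T * ψ ^ 4 := by
      refine ⟨-a - S * ψ ^ 2, ?_⟩
      have := hE_def ▸ hE0
      linear_combination this
    have hcop_μψ4 : IsCoprime μ (ψ ^ 4) :=
      (IsCoprime.of_isCoprime_of_dvd_left hcop_aψ hμa).pow_right
    have hμT : μ ∣ T := hcop_μψ4.dvd_of_dvd_mul_right (dvd_trans hμa haT)
    refine ⟨ε, μ, θ, ψ, 0, hε, hμm, hμsf, hμT, ?_, ?_, ?_⟩
    · exact IsCoprime.of_isCoprime_of_dvd_left hcop_aψ ⟨C ε * θ, by rw [haeq]; ring⟩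
    · rw [← haeq, hψ2]; exact hαab
    · have hrhs : C ε ^ 2 * μ ^ 2 * θ ^ 4 + S * (C ε * μ) * θ ^ 2 * ψ ^ 2 + T * ψ ^ 4 = E := by
        rw [hE_def, haeq]; ring
      rw [hrhs, hE0]
      ring
  · -- main case
    set g := EuclideanDomain.gcd a E with hg_def
    have hg0 : g ≠ 0 := fun h => ha0 (EuclideanDomain.gcd_eq_zero_iff.mp h).1
    obtain ⟨a₁, ha₁⟩ : g ∣ a := EuclideanDomain.gcd_dvd_left a E
    obtain ⟨e₁, he₁⟩ : g ∣ E := EuclideanDomain.gcd_dvd_right a E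
    have hbez := EuclideanDomain.gcd_eq_gcd_ab a E
    have hcop1 : IsCoprime a₁ e₁ := by
      refine ⟨EuclideanDomain.gcdA a E, EuclideanDomain.gcdB a E, ?_⟩
      apply mul_left_cancel₀ hg0
      rw [mul_one]
      linear_combination (-(EuclideanDomain.gcdA a E)) * ha₁ +
        (-(EuclideanDomain.gcdB a E)) * he₁ - hbez
    have hd2' : d ^ 2 = g ^ 2 * (a₁ * e₁) := by rw [hd2, ha₁, he₁]; ring
    obtain ⟨h₁, hh₁⟩ : g ∣ d :=
      (IsIntegrallyClosed.pow_dvd_pow_iff two_ne_zero).mp ⟨a₁ * e₁, hd2'⟩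
    have hh2 : a₁ * e₁ = h₁ ^ 2 := by
      apply mul_left_cancel₀ (pow_ne_zero 2 hg0)
      rw [← hd2', hh₁]; ring
    obtain ⟨w, v, hv⟩ := exists_associated_pow_of_mul_eq_pow' hcop1 hh2
    obtain ⟨v0, hv0u, hv0⟩ := Polynomial.isUnit_iff.mp v.isUnit
    obtain ⟨e2, μ, t, he2, hμm, hμsf, hgeq⟩ := exists_sf_decomp' g hg0
    set ε := e2 * v0 with hε_def
    have hε : ε ≠ 0 := mul_ne_zero he2 hv0u.ne_zero
    have haeq : a = C ε * μ * (t * w) ^ 2 := by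
      rw [ha₁, hgeq, ← hv, ← hv0, hε_def, C_mul]
      ring
    have hμg : μ ∣ g := ⟨C e2 * t ^ 2, by rw [hgeq]; ring⟩
    have hga : g ∣ a := ⟨a₁, ha₁⟩
    have hgT : g ∣ T * ψ ^ 4 := by
      have h1 : T * ψ ^ 4 = E - a * a - S * a * ψ ^ 2 := by rw [hE_def]; ring
      rw [h1]
      exact dvd_sub (dvd_sub ⟨e₁, he₁⟩ (hga.mul_right a)) ((hga.mul_left S).mul_right _)
    have hcop_gψ4 : IsCoprime g (ψ ^ 4) :=
      (IsCoprime.of_isCoprime_of_dvd_left hcop_aψ hga).pow_right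
    have hgT' : g ∣ T := hcop_gψ4.dvd_of_dvd_mul_right hgT
    have hμT : μ ∣ T := dvd_trans hμg hgT'
    obtain ⟨E₁, hE₁⟩ : μ ∣ E := dvd_trans hμg ⟨e₁, he₁⟩
    have ht0 : t ≠ 0 := by
      rintro rfl
      rw [hgeq] at hg0
      simp at hg0
    have hw0 : w ≠ 0 := by
      rintro rfl
      rw [haeq] at ha0
      simp at ha0
    have hμtw0 : μ * (t * w) ≠ 0 := mul_ne_zero hμm.ne_zero (mul_ne_zero ht0 hw0)
    have hd2'' : d ^ 2 = (μ * (t * w)) ^ 2 * (C ε * E₁) := by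
      rw [hd2, haeq, hE₁]; ring
    obtain ⟨m, hm⟩ : μ * (t * w) ∣ d :=
      (IsIntegrallyClosed.pow_dvd_pow_iff two_ne_zero).mp ⟨C ε * E₁, hd2''⟩
    have hm2 : m ^ 2 = C ε * E₁ := by
      apply mul_left_cancel₀ (pow_ne_zero 2 hμtw0)
      rw [← hd2'', hm]; ring
    have hinv : (C ε : Polynomial k) * C ε⁻¹ = 1 := by
      rw [← C_mul, mul_inv_cancel₀ hε, C_1]
    refine ⟨ε, μ, t * w, ψ, C ε⁻¹ * m, hε, hμm, hμsf, hμT, ?_, ?_, ?_⟩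
    · exact IsCoprime.of_isCoprime_of_dvd_left hcop_aψ ⟨C ε * (t * w), by rw [haeq]; ring⟩
    · rw [← haeq, hψ2]; exact hαab
    · have hrhs : C ε ^ 2 * μ ^ 2 * (t * w) ^ 4 + S * (C ε * μ) * (t * w) ^ 2 * ψ ^ 2
          + T * ψ ^ 4 = E := by
        rw [hE_def, haeq]; ring
      rw [hrhs, hE₁]
      calc C ε * μ * (C ε⁻¹ * m) ^ 2
          = (C ε * C ε⁻¹) * C ε⁻¹ * μ * m ^ 2 := by ring
        _ = C ε⁻¹ * μ * (C ε * E₁) := by rw [hinv, hm2]; ring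
        _ = (C ε * C ε⁻¹) * (μ * E₁) := by ring
        _ = μ * E₁ := by rw [hinv, one_mul]
end

section
/- Let k be a field of characteristic 0 and let p ∈ k[x] be irreducible. Let d, e, δ, μ, θ, ψ, ν ∈ k[x] satisfy: μ·ν² = (μθ² + δe²ψ²)·(μθ² + δ(e²−4d)ψ²), p divides d, p is coprime to δ·e·μ, μ ≠ 0, (θ, ψ) ≠ (0,0), and gcd(θ, ψ) = 1. Then in the field k[x]/(p), the image of μ is either a nonzero square or equals (−δ) times a nonzero square. -/
set_option maxHeartbeats 1000000


theorem mu_square_or_minus_delta_square_mod_p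
    (k : Type*) [Field k] [CharZero k]
    (p d e δ μ θ ψ ν : Polynomial k) (hp : Irreducible p)
    (heq : μ * ν ^ 2 =
      (μ * θ ^ 2 + δ * e ^ 2 * ψ ^ 2) * (μ * θ ^ 2 + δ * (e ^ 2 - 4 * d) * ψ ^ 2))
    (hpd : p ∣ d) (hcop : IsCoprime p (δ * e * μ)) (hμ : μ ≠ 0)
    (hθψ : ¬(θ = 0 ∧ ψ = 0)) (hgcd : IsCoprime θ ψ) :
    (∃ w : Polynomial k ⧸ Ideal.span {p}, w ≠ 0 ∧
        Ideal.Quotient.mk (Ideal.span {p}) μ = w ^ 2) ∨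
    (∃ w : Polynomial k ⧸ Ideal.span {p}, w ≠ 0 ∧
        Ideal.Quotient.mk (Ideal.span {p}) μ
          = -(Ideal.Quotient.mk (Ideal.span {p}) δ) * w ^ 2) := by
  haveI : (Ideal.span {p}).IsMaximal := PrincipalIdealRing.isMaximal_of_irreducible hp
  letI : Field (Polynomial k ⧸ Ideal.span {p}) := Ideal.Quotient.field _
  set φ := Ideal.Quotient.mk (Ideal.span {p}) with hφ
  have hd0 : φ d = 0 := by
    rw [hφ, Ideal.Quotient.eq_zero_iff_mem, Ideal.mem_span_singleton]; exact hpd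
  have hp0 : φ p = 0 := by
    rw [hφ, Ideal.Quotient.eq_zero_iff_mem, Ideal.mem_span_singleton]
  have hunit : φ δ * φ e * φ μ ≠ 0 := by
    obtain ⟨a, b, hab⟩ := hcop
    intro h
    have h1 := congrArg φ hab
    simp only [map_add, map_mul, map_one, hp0, mul_zero, zero_add] at h1
    rw [← map_mul, ← map_mul] at h1
    have : φ b * (φ δ * φ e * φ μ) = 1 := by
      rw [← h1]; push_cast [map_mul]; ring
    rw [h, mul_zero] at this
    exact zero_ne_one this
  have hΔ : φ δ ≠ 0 := fun h => hunit (by rw [h]; ring)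
  have hE : φ e ≠ 0 := fun h => hunit (by rw [h]; ring)
  have hM : φ μ ≠ 0 := fun h => hunit (by rw [h]; ring)
  have heq' : φ μ * φ ν ^ 2 = (φ μ * φ θ ^ 2 + φ δ * φ e ^ 2 * φ ψ ^ 2) ^ 2 := by
    have h1 := congrArg φ heq
    simp only [map_mul, map_add, map_sub, map_pow, hd0, mul_zero, sub_zero] at h1
    rw [h1]; ring
  by_cases hA : φ μ * φ θ ^ 2 + φ δ * φ e ^ 2 * φ ψ ^ 2 = 0
  · -- μ ≡ -δ (eψ/θ)²
    right
    have hgcd' : IsCoprime (φ θ) (φ ψ) := hgcd.map φ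
    have hΨ : φ ψ ≠ 0 := by
      intro h
      rw [h] at hA hgcd'
      rw [zero_pow (two_ne_zero), mul_zero, add_zero] at hA
      have hΘ : φ θ = 0 := by
        rcases mul_eq_zero.mp hA with h' | h'
        · exact absurd h' hM
        · exact pow_eq_zero_iff two_ne_zero |>.mp h'
      rw [hΘ] at hgcd'
      exact not_isCoprime_zero_zero hgcd'
    have hΘ : φ θ ≠ 0 := by
      intro h
      rw [h] at hA
      rw [zero_pow (two_ne_zero), mul_zero, zero_add] at hA
      rw [mul_assoc] at hA
      exact mul_ne_zero hΔ (mul_ne_zero (pow_ne_zero 2 hE) (pow_ne_zero 2 hΨ)) hA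
    refine ⟨φ e * φ ψ * (φ θ)⁻¹, ?_, ?_⟩
    · exact mul_ne_zero (mul_ne_zero hE hΨ) (inv_ne_zero hΘ)
    · refine mul_right_cancel₀ (pow_ne_zero 2 hΘ) ?_
      linear_combination hA + φ δ * φ e ^ 2 * φ ψ ^ 2 * (φ θ * (φ θ)⁻¹ + 1) *
        (mul_inv_cancel₀ hΘ)
  · -- μ is a nonzero square
    left
    have hN : φ ν ≠ 0 := by
      intro h
      rw [h] at heq'
      rw [zero_pow (two_ne_zero), mul_zero] at heq'
      exact hA (pow_eq_zero_iff two_ne_zero |>.mp heq'.symm)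
    refine ⟨(φ μ * φ θ ^ 2 + φ δ * φ e ^ 2 * φ ψ ^ 2) * (φ ν)⁻¹, ?_, ?_⟩
    · exact mul_ne_zero hA (inv_ne_zero hN)
    · refine mul_right_cancel₀ (pow_ne_zero 2 hN) ?_
      linear_combination heq' - (φ μ * φ θ ^ 2 + φ δ * φ e ^ 2 * φ ψ ^ 2) ^ 2 *
        (φ ν * (φ ν)⁻¹ + 1) * (mul_inv_cancel₀ hN)
end
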